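/- Let Σ be a finite complete simplicial fan in N, σ ∈ Σ with dim σ ≥ 2, and x a primitive element of N in the relative interior of σ. Then for every primitive collection P* of the star subdivision Σ*_{(σ,x)} with x ∈ P*, there exists a primitive collection P ∈ PC(Σ) such that (P ∖ G(σ)) ∪ {x} = P*. -/

import Mathlib

noncomputable section

open Finset

/-- The real vector space `N_ℝ` for the lattice `N = ℤ^d`. -/
abbrev NR (d : ℕ) := Fin d → ℝ

/-- The canonical map from the lattice `N = ℤ^d` to `N_ℝ`. -/
def toNR {d : ℕ} (x : Fin d → ℤ) : NR d := fun i => (x i : ℝ)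

/-- The convex cone generated by a set: all finite nonnegative real combinations. -/
def coneOf {d : ℕ} (S : Set (NR d)) : Set (NR d) :=
  { y | ∃ (n : ℕ) (c : Fin n → ℝ) (v : Fin n → NR d),
      (∀ i, 0 ≤ c i) ∧ (∀ i, v i ∈ S) ∧ y = ∑ i, c i • v i }

/-- `τ` is a face of the cone `σ`, cut out by a linear functional nonnegative on `σ`. -/
def IsFaceOf {d : ℕ} (τ σ : Set (NR d)) : Prop :=
  ∃ u : NR d →ₗ[ℝ] ℝ, (∀ x ∈ σ, 0 ≤ u x) ∧ τ = {x ∈ σ | u x = 0}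

/-- A rational polyhedral cone: generated by finitely many lattice points. -/
def IsRationalPolyhedralCone {d : ℕ} (σ : Set (NR d)) : Prop :=
  ∃ S : Finset (Fin d → ℤ), σ = coneOf (toNR '' (↑S : Set (Fin d → ℤ)))

/-- A pointed (strongly convex) cone. -/
def IsPointedCone {d : ℕ} (σ : Set (NR d)) : Prop :=
  ∀ x ∈ σ, -x ∈ σ → x = 0

/-- A primitive lattice vector. -/
def IsPrimitive {d : ℕ} (x : Fin d → ℤ) : Prop :=
  x ≠ 0 ∧ ∀ (k : ℤ) (y : Fin d → ℤ), x = k • y → k = 1 ∨ k = -1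

/-- The dimension of a cone. -/
def coneDim {d : ℕ} (σ : Set (NR d)) : ℕ :=
  Module.finrank ℝ ↥(Submodule.span ℝ σ)

/-- A (finite) fan in `N = ℤ^d`: a finite collection of rational pointed polyhedral
cones, closed under taking faces, such that the intersection of any two cones is a
face of each. -/
structure Fan (d : ℕ) where
  cones : Set (Set (NR d))
  finite : cones.Finite
  rational : ∀ σ ∈ cones, IsRationalPolyhedralCone σ
  pointed : ∀ σ ∈ cones, IsPointedCone σ
  face_mem : ∀ σ ∈ cones, ∀ τ : Set (NR d), IsFaceOf τ σ → τ ∈ cones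
  inter_face : ∀ σ ∈ cones, ∀ τ ∈ cones, IsFaceOf (σ ∩ τ) σ

namespace Fan

variable {d : ℕ}

/-- A complete fan. -/
def IsComplete (F : Fan d) : Prop := ⋃₀ F.cones = Set.univ

/-- A simplicial fan: every cone is generated by linearly independent vectors. -/
def IsSimplicial (F : Fan d) : Prop :=
  ∀ σ ∈ F.cones, ∃ S : Finset (Fin d → ℤ),
    LinearIndependent ℝ (fun v : ↥(toNR '' (↑S : Set (Fin d → ℤ))) => (v : NR d)) ∧
    σ = coneOf (toNR '' (↑S : Set (Fin d → ℤ)))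

/-- A nonsingular fan: every cone is generated by part of a `ℤ`-basis of `N`. -/
def IsNonsingular (F : Fan d) : Prop :=
  ∀ σ ∈ F.cones, ∃ (b : Module.Basis (Fin d) ℤ (Fin d → ℤ)) (t : Set (Fin d)),
    σ = coneOf (toNR '' (⇑b '' t))

/-- `G(Σ)`: the set of primitive generators of the rays of a fan. -/
def genSet (F : Fan d) : Set (Fin d → ℤ) :=
  { x | IsPrimitive x ∧ coneOf {toNR x} ∈ F.cones }

/-- `G(σ) = σ ∩ G(Σ)`. -/
def coneGens (F : Fan d) (σ : Set (NR d)) : Set (Fin d → ℤ) :=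
  { x ∈ F.genSet | toNR x ∈ σ }

/-- A primitive collection of a fan. -/
def IsPrimitiveCollection (F : Fan d) (P : Finset (Fin d → ℤ)) : Prop :=
  P.Nonempty ∧ (↑P : Set (Fin d → ℤ)) ⊆ F.genSet ∧
    coneOf (toNR '' (↑P : Set (Fin d → ℤ))) ∉ F.cones ∧
    ∀ x ∈ P, coneOf (toNR '' ((↑P : Set (Fin d → ℤ)) \ {x})) ∈ F.cones

/-- `IsPrimRel F P Y a`: `P` is a primitive collection of `F` whose primitive relation is
`∑_{x ∈ P} x = ∑_{y ∈ Y} (a y) • y`, where `Y = G(σ(P))` and `σ(P)` is the unique cone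
whose relative interior contains `∑_{x ∈ P} x`, and the coefficients `a y` are positive. -/
def IsPrimRel (F : Fan d) (P Y : Finset (Fin d → ℤ)) (a : (Fin d → ℤ) → ℤ) : Prop :=
  F.IsPrimitiveCollection P ∧
  ∃ σ ∈ F.cones, (↑Y : Set (Fin d → ℤ)) = F.coneGens σ ∧
    toNR (∑ x ∈ P, x) ∈ intrinsicInterior ℝ σ ∧
    (∀ y ∈ Y, 0 < a y) ∧ (∑ x ∈ P, x) = ∑ y ∈ Y, a y • y

/-- A Fano fan: a finite complete nonsingular fan with `deg P > 0` for every
primitive collection `P` (so its toric variety is a nonsingular toric Fano `d`-fold). -/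
def IsFanoFan (F : Fan d) : Prop :=
  F.IsComplete ∧ F.IsNonsingular ∧
    ∀ P Y a, F.IsPrimRel P Y a → ∑ y ∈ Y, a y < (P.card : ℤ)

/-- The collection of cones of the star subdivision of `F` along `(σ, x)`. -/
def starSub (F : Fan d) (σ : Set (NR d)) (x : Fin d → ℤ) : Set (Set (NR d)) :=
  { τ ∈ F.cones | ¬ IsFaceOf σ τ } ∪
  { ρ | ∃ τ ∈ F.cones, IsFaceOf σ τ ∧ ∃ xi ∈ F.coneGens σ,
      IsFaceOf ρ (coneOf (toNR ''
        (insert x ((F.coneGens τ \ F.coneGens σ) ∪ (F.coneGens σ \ {xi}))))) }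

/-- `F'` is the star subdivision of `F` along `(σ, x)`. -/
def IsStarSubdivisionOf (F' F : Fan d) (σ : Set (NR d)) (x : Fin d → ℤ) : Prop :=
  F'.cones = F.starSub σ x

/-- `F'` is an equivariant blow-up of `F`: the star subdivision along a cone `σ` (with at
least two generators) and the sum of the elements of `G(σ)`. -/
def IsBlowupOf (F' F : Fan d) : Prop :=
  ∃ σ ∈ F.cones, ∃ S : Finset (Fin d → ℤ),
    (↑S : Set (Fin d → ℤ)) = F.coneGens σ ∧ 2 ≤ S.card ∧
    F'.IsStarSubdivisionOf F σ (∑ y ∈ S, y)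

/-- One step of F-equivalence: an equivariant blow-up or blow-down between Fano fans. -/
def FStep (F G : Fan d) : Prop :=
  F.IsFanoFan ∧ G.IsFanoFan ∧ (G.IsBlowupOf F ∨ F.IsBlowupOf G)

/-- F-equivalence of Fano fans. -/
def FEquiv : Fan d → Fan d → Prop := Relation.ReflTransGen FStep

/-- A splitting fan: any two distinct primitive collections are disjoint. -/
def IsSplittingFan (F : Fan d) : Prop :=
  F.IsComplete ∧ F.IsNonsingular ∧
    ∀ P Q, F.IsPrimitiveCollection P → F.IsPrimitiveCollection Q → P ≠ Q →
      ∀ x ∈ P, x ∉ Q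

/-- Data of a wall relation: `τ` is a wall (a `(d-1)`-dimensional cone) with
`G(τ) = Z`, `z_d = zd`, `z_{d+1} = zd1` the generators of the two maximal cones
containing `τ`, and `∑_{z ∈ Z} (b z) • z + zd + zd1 = 0`.  The anticanonical degree of
the corresponding invariant curve is `∑_{z ∈ Z} b z + 2`. -/
def IsWallRel (F : Fan d) (τ : Set (NR d)) (Z : Finset (Fin d → ℤ))
    (zd zd1 : Fin d → ℤ) (b : (Fin d → ℤ) → ℤ) : Prop :=
  τ ∈ F.cones ∧ coneDim τ = d - 1 ∧ (↑Z : Set (Fin d → ℤ)) = F.coneGens τ ∧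
    zd ∈ F.genSet ∧ zd1 ∈ F.genSet ∧ zd ≠ zd1 ∧ zd ∉ Z ∧ zd1 ∉ Z ∧
    coneOf (toNR '' (insert zd (↑Z : Set (Fin d → ℤ)))) ∈ F.cones ∧
    coneOf (toNR '' (insert zd1 (↑Z : Set (Fin d → ℤ)))) ∈ F.cones ∧
    (∑ z ∈ Z, b z • z) + zd + zd1 = 0

end Fan

/-- The fan of a product of projective spaces `P^{a 0} × ⋯ × P^{a (r-1)}`. -/
def IsProdProjFan {d r : ℕ} (F : Fan d) (a : Fin r → ℕ) : Prop :=
  ∃ e : (j : Fin r) → Fin (a j + 1) → (Fin d → ℤ),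
    (∀ j, ∑ i, e j i = 0) ∧
    (∃ b : Module.Basis ((j : Fin r) × Fin (a j)) ℤ (Fin d → ℤ),
       ∀ (j : Fin r) (i : Fin (a j)), e j i.castSucc = b ⟨j, i⟩) ∧
    F.cones = { σ | ∃ s : (j : Fin r) → Finset (Fin (a j + 1)),
        (∀ j, s j ≠ Finset.univ) ∧
        σ = coneOf (toNR '' (⋃ j, (e j) '' (↑(s j) : Set (Fin (a j + 1))))) }

/-- The fan of the projective space `P^d`. -/
def IsProjFan {d : ℕ} (F : Fan d) : Prop := IsProdProjFan F (fun _ : Fin 1 => d)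

/-- The lattice points of `N_ℝ`. -/
def latticePts (d : ℕ) : Set (NR d) := Set.range (toNR (d := d))

/-- `F` is, up to a unimodular identification, the product of the fans `F₁` and `F₂`. -/
def IsProductOf {d d₁ d₂ : ℕ} (F : Fan d) (F₁ : Fan d₁) (F₂ : Fan d₂) : Prop :=
  ∃ φ : NR d ≃ₗ[ℝ] NR d₁ × NR d₂,
    (⇑φ '' latticePts d = (latticePts d₁) ×ˢ (latticePts d₂)) ∧
    F.cones = { σ | ∃ σ₁ ∈ F₁.cones, ∃ σ₂ ∈ F₂.cones, ⇑φ '' σ = σ₁ ×ˢ σ₂ }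

/-- `δ` is a nonempty proper face of the polytope `Δ`. -/
def IsProperPolytopeFace {d : ℕ} (δ Δ : Set (NR d)) : Prop :=
  δ.Nonempty ∧ δ ≠ Δ ∧ ∃ (u : NR d →ₗ[ℝ] ℝ) (c : ℝ),
    (∀ x ∈ Δ, u x ≤ c) ∧ δ = {x ∈ Δ | u x = c}

/-- The collection of cones over the proper faces of the polytope `Conv(V)`
(together with the zero cone). -/
def polytopeFaceFan {d : ℕ} (V : Set (NR d)) : Set (Set (NR d)) :=
  insert ({0} : Set (NR d))
    { σ | ∃ δ : Set (NR d), IsProperPolytopeFace δ (convexHull ℝ V) ∧ σ = coneOf δ }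

/-- The four-dimensional del Pezzo fan `V⁴` (up to unimodular equivalence). -/
def IsDelPezzoFan4 (F : Fan 4) : Prop :=
  ∃ b : Module.Basis (Fin 4) ℤ (Fin 4 → ℤ),
    F.cones = polytopeFaceFan (toNR ''
      ((Set.range ⇑b) ∪ (Set.range fun i => -b i) ∪ {(∑ i, b i), -(∑ i, b i)}))

/-- The four-dimensional pseudo del Pezzo fan `Ṽ⁴` (up to unimodular equivalence). -/
def IsPseudoDelPezzoFan4 (F : Fan 4) : Prop :=
  ∃ b : Module.Basis (Fin 4) ℤ (Fin 4 → ℤ),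
    F.cones = polytopeFaceFan (toNR ''
      ((Set.range ⇑b) ∪ (Set.range fun i => -b i) ∪ {∑ i, b i}))

/-- An equivariant blow-up of a 3-dimensional fan at an invariant point: star subdivision
along a 3-dimensional cone and the sum of its three generators. -/
def PointBlowup3 (F' F : Fan 3) : Prop :=
  ∃ σ ∈ F.cones, ∃ S : Finset (Fin 3 → ℤ),
    (↑S : Set (Fin 3 → ℤ)) = F.coneGens σ ∧ S.card = 3 ∧
    F'.IsStarSubdivisionOf F σ (∑ y ∈ S, y)

/-- An equivariant blow-up of a 3-dimensional fan along an invariant curve: star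
subdivision along a 2-dimensional cone and the sum of its two generators. -/
def CurveBlowup3 (F' F : Fan 3) : Prop :=
  ∃ σ ∈ F.cones, ∃ S : Finset (Fin 3 → ℤ),
    (↑S : Set (Fin 3 → ℤ)) = F.coneGens σ ∧ S.card = 2 ∧
    F'.IsStarSubdivisionOf F σ (∑ y ∈ S, y)

/-!
A cone of the star subdivision that contains `x` is a face of some `σ_i + τ'`, hence lies in a
cone `τ ⊇ σ` of `Σ`; and no cone of the star subdivision contains all of `G(σ)`, because the
generator `x_i` is cut off from `σ_i + τ'` by a linear functional vanishing at `x`. Consequently a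
primitive collection `P*` containing `x` is disjoint from `G(σ)` (otherwise `Cone(P*)` would be a
face of some `σ_i + τ'`), and `Q := P* ∖ {x}` together with `G(σ)` does not span a cone of `Σ`.
A minimal subset `P` of `Q ∪ G(σ)` that does not span a cone of `Σ` is a primitive collection of
`Σ`, and it contains `Q`: dropping `y ∈ Q` from `P*` gives a cone of the star subdivision
containing `x`, so a cone `τ ⊇ σ` of `Σ` containing `Cone(P)`. Hence `(P ∖ G(σ)) ∪ {x} = P*`.
-/

theorem LinearIndepOn.exists_linearMap_apply_eq {K V ι : Type*} [Field K] [AddCommGroup V]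
    [Module K V] {v : ι → V} {s : Set ι} (hs : LinearIndepOn K v s) (f : ι → K) :
    ∃ u : V →ₗ[K] K, ∀ i ∈ s, u (v i) = f i := by
  obtain ⟨u, hu⟩ := LinearMap.exists_extend ((Module.Basis.span hs).constr K fun i => f i)
  refine ⟨u, fun i hi => ?_⟩
  have h := LinearMap.congr_fun hu (Module.Basis.span hs ⟨i, hi⟩)
  rwa [LinearMap.comp_apply, Module.Basis.constr_basis, Submodule.subtype_apply,
    Module.Basis.span_apply hs] at h

theorem LinearIndepOn.notMem_span_image_diff_singleton {K V ι : Type*} [DivisionRing K]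
    [AddCommGroup V] [Module K V] {v : ι → V} {s : Set ι} (hs : LinearIndepOn K v s) {i : ι}
    (hi : i ∈ s) : v i ∉ Submodule.span K (v '' (s \ {i})) :=
  (hs.mono Set.sdiff_subset).notMem_span_iff.2
    ⟨by rwa [Set.insert_sdiff_singleton, Set.insert_eq_of_mem hi], fun h => h.2 rfl⟩

theorem IsCoprime.exists_eq_smul_of_smul_eq {R M : Type*} [CommRing R] [AddCommGroup M]
    [Module R M] {a b : R} (hab : IsCoprime a b) {v w : M} (h : a • w = b • v) :
    ∃ y : M, v = a • y ∧ w = b • y := by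
  obtain ⟨s, t, hst⟩ := hab
  refine ⟨s • v + t • w, ?_, ?_⟩
  · linear_combination (norm := module) (-t) • h - hst • v
  · linear_combination (norm := module) s • h - hst • w

theorem LinearMap.eq_zero_of_mem_intrinsicInterior {E : Type*} [NormedAddCommGroup E]
    [NormedSpace ℝ E] {s : Set E} {z : E} (hz : z ∈ intrinsicInterior ℝ s) {u : E →ₗ[ℝ] ℝ}
    (hu : ∀ y ∈ s, 0 ≤ u y) (hz0 : u z = 0) {y : E} (hy : y ∈ s) : u y = 0 := by
  obtain ⟨z', hz', rfl⟩ := mem_intrinsicInterior.1 hz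
  -- `s` contains points `lineMap y z t` with `t > 1`, where `u` takes the value `(1 - t) * u y`
  let γ : ℝ → affineSpan ℝ s := fun t =>
    ⟨AffineMap.lineMap y z' t, AffineMap.lineMap_mem _ (subset_affineSpan ℝ s hy) z'.2⟩
  have hγ : Continuous γ := AffineMap.lineMap_continuous.subtype_mk _
  have hγ1 : γ 1 = z' := Subtype.ext (AffineMap.lineMap_apply_one _ _)
  have hnear : ∀ᶠ t in nhdsWithin (1 : ℝ) (Set.Ioi 1), γ t ∈ interior ((↑) ⁻¹' s) :=
    nhdsWithin_le_nhds (hγ.continuousAt.preimage_mem_nhds (hγ1 ▸ isOpen_interior.mem_nhds hz'))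
  obtain ⟨t, hts, ht1⟩ := (hnear.and self_mem_nhdsWithin).exists
  have hts' : γ t ∈ ((↑) ⁻¹' s : Set (affineSpan ℝ s)) := interior_subset hts
  have hut : 0 ≤ u (AffineMap.lineMap y (z' : E) t) := hu _ hts'
  rw [AffineMap.lineMap_apply_module, map_add, map_smul, map_smul, hz0, smul_eq_mul,
    smul_zero, add_zero] at hut
  nlinarith [hu y hy, show 1 < t from ht1]

theorem Finset.exists_subset_not_forall_erase {α : Type*} [DecidableEq α] (p : Finset α → Prop)
    {R : Finset α} (hR : ¬p R) : ∃ P ⊆ R, ¬p P ∧ ∀ z ∈ P, p (P.erase z) := by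
  induction R using Finset.strongInduction with
  | H R ih =>
    by_cases hmin : ∀ z ∈ R, p (R.erase z)
    · exact ⟨R, subset_rfl, hR, hmin⟩
    · obtain ⟨z, hz, hpz⟩ := not_forall₂.1 hmin
      obtain ⟨P, hPR, hP⟩ := ih _ (Finset.erase_ssubset hz) hpz
      exact ⟨P, hPR.trans (Finset.erase_subset z R), hP⟩

section Cones

variable {d : ℕ}

theorem coneOf_eq_hull (S : Set (NR d)) : coneOf S = PointedCone.hull ℝ S := by
  ext y
  rw [SetLike.mem_coe, Submodule.mem_span_set']
  constructor
  · rintro ⟨n, c, v, hc, hv, rfl⟩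
    exact ⟨n, fun i => ⟨c i, hc i⟩, fun i => ⟨v i, hv i⟩, rfl⟩
  · rintro ⟨n, c, v, rfl⟩
    exact ⟨n, fun i => c i, fun i => v i, fun i => (c i).2, fun i => (v i).2, rfl⟩

theorem subset_coneOf (S : Set (NR d)) : S ⊆ coneOf S := by
  rw [coneOf_eq_hull]
  exact PointedCone.subset_hull

theorem coneOf_subset_iff {S T : Set (NR d)} : coneOf S ⊆ coneOf T ↔ S ⊆ coneOf T := by
  simp only [coneOf_eq_hull]
  exact Submodule.span_le

theorem coneOf_mono {S T : Set (NR d)} (h : S ⊆ T) : coneOf S ⊆ coneOf T :=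
  coneOf_subset_iff.2 (h.trans (subset_coneOf T))

theorem coneOf_subset_span (S : Set (NR d)) : coneOf S ⊆ Submodule.span ℝ S := by
  rw [coneOf_eq_hull]
  exact PointedCone.hull_le_span ℝ S

theorem mem_coneOf_singleton {w y : NR d} : y ∈ coneOf {w} ↔ ∃ c : ℝ, 0 ≤ c ∧ y = c • w := by
  rw [coneOf_eq_hull, SetLike.mem_coe, Submodule.mem_span_singleton]
  constructor
  · rintro ⟨c, rfl⟩
    exact ⟨c, c.2, rfl⟩
  · rintro ⟨c, hc, rfl⟩
    exact ⟨⟨c, hc⟩, rfl⟩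

theorem mem_coneOf_image_finset {α : Type*} {v : α → NR d} {A : Finset α} {y : NR d} :
    y ∈ coneOf (v '' ↑A) ↔ ∃ c : α → ℝ, (∀ a, 0 ≤ c a) ∧ ∑ a ∈ A, c a • v a = y := by
  rw [coneOf_eq_hull, SetLike.mem_coe, Submodule.mem_span_image_finset_iff_exists_fun']
  constructor
  · rintro ⟨c, rfl⟩
    exact ⟨fun a => c a, fun a => (c a).2, rfl⟩
  · rintro ⟨c, hc, rfl⟩
    exact ⟨fun a => ⟨c a, hc a⟩, rfl⟩

theorem map_nonneg_of_mem_coneOf {S : Set (NR d)} {u : NR d →ₗ[ℝ] ℝ} (hu : ∀ w ∈ S, 0 ≤ u w)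
    {y : NR d} (hy : y ∈ coneOf S) : 0 ≤ u y := by
  rw [coneOf_eq_hull] at hy
  exact (Submodule.span_le (p := (PointedCone.positive ℝ ℝ).comap u)).2 hu hy

theorem map_eq_zero_of_mem_coneOf {S : Set (NR d)} {u : NR d →ₗ[ℝ] ℝ} (hu : ∀ w ∈ S, u w = 0)
    {y : NR d} (hy : y ∈ coneOf S) : u y = 0 :=
  (Submodule.span_le (p := LinearMap.ker u)).2 hu (coneOf_subset_span S hy)

theorem mem_coneOf_sep_of_map_eq_zero {S : Set (NR d)} {u : NR d →ₗ[ℝ] ℝ}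
    (hu : ∀ w ∈ S, 0 ≤ u w) {y : NR d} (hy : y ∈ coneOf S) (hy0 : u y = 0) :
    y ∈ coneOf {w ∈ S | u w = 0} := by
  have hnonneg : ∀ z ∈ PointedCone.hull ℝ S, 0 ≤ u z := fun z hz =>
    map_nonneg_of_mem_coneOf hu (by rwa [coneOf_eq_hull])
  rw [coneOf_eq_hull] at hy ⊢
  induction hy using Submodule.span_induction with
  | mem w hw => exact PointedCone.subset_hull ⟨hw, hy0⟩
  | zero => exact zero_mem _
  | add a b ha hb iha ihb =>
    have ha0 := hnonneg a ha
    have hb0 := hnonneg b hb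
    rw [map_add] at hy0
    exact add_mem (iha (by linarith)) (ihb (by linarith))
  | smul c a ha ih =>
    rcases eq_or_ne c 0 with rfl | hc
    · simp
    · refine Submodule.smul_mem _ c (ih ?_)
      simpa [hc] using hy0

theorem IsFaceOf.subset {ρ σ : Set (NR d)} (h : IsFaceOf ρ σ) : ρ ⊆ σ := by
  obtain ⟨u, -, rfl⟩ := h
  exact Set.sep_subset _ _

theorem IsFaceOf.eq_coneOf_sep {S ρ : Set (NR d)} (h : IsFaceOf ρ (coneOf S)) :
    ρ = coneOf {w ∈ S | w ∈ ρ} := by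
  obtain ⟨u, hu, rfl⟩ := h
  have hS : ∀ w ∈ S, 0 ≤ u w := fun w hw => hu w (subset_coneOf S hw)
  have hsep : {w ∈ S | w ∈ {y ∈ coneOf S | u y = 0}} = {w ∈ S | u w = 0} := by
    ext w
    exact ⟨fun ⟨hw, _, h0⟩ => ⟨hw, h0⟩, fun ⟨hw, h0⟩ => ⟨hw, subset_coneOf S hw, h0⟩⟩
  rw [hsep]
  refine Set.Subset.antisymm (fun y hy => mem_coneOf_sep_of_map_eq_zero hS hy.1 hy.2)
    fun y hy => ⟨coneOf_mono (Set.sep_subset _ _) hy, ?_⟩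
  exact map_eq_zero_of_mem_coneOf (fun w hw => hw.2) hy

theorem isFaceOf_coneOf_of_subset {A T : Set (NR d)} (hT : LinearIndepOn ℝ id T) (hAT : A ⊆ T) :
    IsFaceOf (coneOf A) (coneOf T) := by
  classical
  obtain ⟨u, hu⟩ := hT.exists_linearMap_apply_eq fun w => if w ∈ A then 0 else 1
  simp only [id] at hu
  have hT0 : ∀ w ∈ T, 0 ≤ u w := fun w hw => by
    rw [hu w hw]
    split_ifs <;> norm_num
  refine ⟨u, fun _ => map_nonneg_of_mem_coneOf hT0, Set.Subset.antisymm
    (fun y hy => ⟨coneOf_mono hAT hy, ?_⟩) fun y hy => ?_⟩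
  · exact map_eq_zero_of_mem_coneOf (fun w hw => by simp [hu w (hAT hw), hw]) hy
  · refine coneOf_mono (fun w hw => ?_) (mem_coneOf_sep_of_map_eq_zero hT0 hy.1 hy.2)
    by_contra hwA
    simp [hu w hw.1, hwA] at hw

theorem exists_pos_smul_mem_of_isFaceOf {S : Set (NR d)} {w : NR d} (hw : w ≠ 0)
    (h : IsFaceOf (coneOf {w}) (coneOf S)) : ∃ s ∈ S, ∃ c : ℝ, 0 < c ∧ s = c • w := by
  by_contra! hno
  have hzero : ∀ s ∈ {s ∈ S | s ∈ coneOf {w}}, s = 0 := by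
    rintro s ⟨hs, hsw⟩
    obtain ⟨c, hc, rfl⟩ := mem_coneOf_singleton.1 hsw
    rcases hc.eq_or_lt with rfl | hc
    · exact zero_smul ℝ w
    · exact absurd rfl (hno _ hs c hc)
  have hwmem : w ∈ coneOf {s ∈ S | s ∈ coneOf {w}} := by
    rw [← h.eq_coneOf_sep]
    exact subset_coneOf _ rfl
  have := coneOf_subset_span _ hwmem
  rw [Submodule.span_eq_bot.2 hzero] at this
  exact hw this

theorem IsFaceOf.eq_of_mem_intrinsicInterior {ρ σ : Set (NR d)} (h : IsFaceOf ρ σ) {z : NR d}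
    (hz : z ∈ intrinsicInterior ℝ σ) (hzρ : z ∈ ρ) : ρ = σ := by
  obtain ⟨u, hu, rfl⟩ := h
  exact Set.sep_eq_self_iff_mem_true.2 fun y hy => u.eq_zero_of_mem_intrinsicInterior hz hu hzρ.2 hy

theorem coneDim_mono {σ τ : Set (NR d)} (h : σ ⊆ τ) : coneDim σ ≤ coneDim τ :=
  Submodule.finrank_mono (Submodule.span_mono h)

theorem coneDim_coneOf_le_card (T : Finset (NR d)) :
    coneDim (coneOf (T : Set (NR d))) ≤ T.card := by
  refine (Submodule.finrank_mono ?_).trans (finrank_span_finset_le_card T)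
  exact Submodule.span_le.2 (coneOf_subset_span _)

end Cones

section Lattice

variable {d : ℕ}

theorem toNR_injective : Function.Injective (toNR (d := d)) := fun a b h =>
  funext fun i => by simpa [toNR] using congrFun h i

@[simp]
theorem toNR_eq_zero {v : Fin d → ℤ} : toNR v = 0 ↔ v = 0 :=
  toNR_injective.eq_iff' (funext fun _ => Int.cast_zero)

theorem toNR_smul (k : ℤ) (v : Fin d → ℤ) : toNR (k • v) = (k : ℝ) • toNR v := by
  funext i
  simp [toNR]

theorem linearIndepOn_toNR_iff {G : Set (Fin d → ℤ)} :
    LinearIndepOn ℝ toNR G ↔ LinearIndepOn ℝ id (toNR '' G) :=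
  linearIndepOn_iff_image toNR_injective.injOn

def content (v : Fin d → ℤ) : ℤ := Finset.univ.gcd v

def primPart (v : Fin d → ℤ) : Fin d → ℤ := fun i => v i / content v

theorem content_smul_primPart (v : Fin d → ℤ) : content v • primPart v = v := by
  funext i
  exact Int.mul_ediv_cancel' (Finset.gcd_dvd (Finset.mem_univ i))

theorem content_pos {v : Fin d → ℤ} (hv : v ≠ 0) : 0 < content v := by
  refine lt_of_le_of_ne ?_ fun h => hv (funext fun i => ?_)
  · exact Int.nonneg_of_normalize_eq_self Finset.normalize_gcd
  · exact Finset.gcd_eq_zero_iff.1 h.symm i (Finset.mem_univ i)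

theorem isPrimitive_primPart {v : Fin d → ℤ} (hv : v ≠ 0) : IsPrimitive (primPart v) := by
  have hc := content_pos hv
  refine ⟨fun h => hv (by rw [← content_smul_primPart v, h, smul_zero]), fun k y hky => ?_⟩
  have hvk : v = (content v * k) • y := by rw [mul_smul, ← hky, content_smul_primPart]
  have hdvd : content v * k ∣ content v :=
    Finset.dvd_gcd fun i _ => ⟨y i, by simpa using congrFun hvk i⟩
  have hk : k ∣ 1 := (mul_dvd_mul_iff_left hc.ne').1 (by rwa [mul_one])
  exact Int.isUnit_iff.1 (isUnit_of_dvd_one hk)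

theorem IsPrimitive.eq_of_toNR_eq_smul {w v : Fin d → ℤ} (hw : IsPrimitive w) (hv : IsPrimitive v)
    {c : ℝ} (hc : 0 < c) (h : toNR w = c • toNR v) : w = v := by
  obtain ⟨i, hi⟩ : ∃ i, v i ≠ 0 := by
    by_contra! h0
    exact hv.1 (funext h0)
  have hcoord : ∀ j, (w j : ℝ) = c * v j := fun j => congrFun h j
  -- `v i = a * g` and `w i = b * g` with `a`, `b` coprime, so `c = b / a` and `a • w = b • v`
  obtain ⟨g, a, b, hg, hab, ha, hb⟩ := Int.exists_gcd_one' (Int.gcd_pos_of_ne_zero_left (w i) hi)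
  have hba : (b : ℝ) = c * a := by
    have hi' := hcoord i
    rw [ha, hb] at hi'
    push_cast at hi'
    exact mul_right_cancel₀ (Nat.cast_pos.2 hg).ne' (by rw [hi']; ring)
  have hrel : a • w = b • v := funext fun j => by
    simp only [Pi.smul_apply, smul_eq_mul]
    exact_mod_cast (by rw [hcoord j, hba]; ring : (a : ℝ) * w j = b * v j)
  obtain ⟨y, hvy, hwy⟩ := (Int.isCoprime_iff_gcd_eq_one.2 hab).exists_eq_smul_of_smul_eq hrel
  rcases hv.2 a y hvy with rfl | rfl <;> rcases hw.2 b y hwy with rfl | rfl <;>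
    first
    | exact hwy.trans hvy.symm
    | (norm_num at hba; linarith)

theorem toNR_primPart {v : Fin d → ℤ} (hv : v ≠ 0) :
    toNR (primPart v) = ((content v : ℝ)⁻¹) • toNR v := by
  have hc : (content v : ℝ) ≠ 0 := by exact_mod_cast (content_pos hv).ne'
  rw [eq_inv_smul_iff₀ hc, ← toNR_smul, content_smul_primPart]

theorem coneOf_toNR_primPart {v : Fin d → ℤ} (hv : v ≠ 0) :
    coneOf {toNR (primPart v)} = coneOf {toNR v} := by
  have hc : (0 : ℝ) < content v := by exact_mod_cast content_pos hv
  refine Set.Subset.antisymm (coneOf_subset_iff.2 ?_) (coneOf_subset_iff.2 ?_) <;>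
    rw [Set.singleton_subset_iff, mem_coneOf_singleton]
  · exact ⟨_, (inv_pos.2 hc).le, toNR_primPart hv⟩
  · exact ⟨content v, hc.le, by rw [← toNR_smul, content_smul_primPart]⟩

end Lattice

section Exchange

variable {d : ℕ} {G : Set (Fin d → ℤ)} {B : Finset (Fin d → ℤ)} {c : (Fin d → ℤ) → ℝ}
  {x xi : Fin d → ℤ}

theorem exists_pos_sum_of_mem_intrinsicInterior
    (hB : LinearIndepOn ℝ toNR (B : Set (Fin d → ℤ))) {y : NR d}
    (hy : y ∈ intrinsicInterior ℝ (coneOf (toNR '' B))) :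
    ∃ c : (Fin d → ℤ) → ℝ, (∀ v ∈ B, 0 < c v) ∧ y = ∑ v ∈ B, c v • toNR v := by
  obtain ⟨c, hc0, hcy⟩ := mem_coneOf_image_finset.1 (intrinsicInterior_subset hy)
  refine ⟨c, fun v hv => (hc0 v).lt_of_ne' fun hcv => ?_, hcy.symm⟩
  -- otherwise `y` lies in the proper face spanned by `B \ {v}`
  have hyface : y ∈ coneOf (toNR '' (B.erase v : Set (Fin d → ℤ))) :=
    mem_coneOf_image_finset.2 ⟨c, hc0, by rw [← hcy, ← Finset.add_sum_erase _ _ hv, hcv,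
      zero_smul, zero_add]⟩
  have hface := isFaceOf_coneOf_of_subset (linearIndepOn_toNR_iff.1 hB)
    (Set.image_mono (Finset.coe_subset.2 (B.erase_subset v)))
  have hv' : toNR v ∈ coneOf (toNR '' (B.erase v : Set (Fin d → ℤ))) := by
    rw [hface.eq_of_mem_intrinsicInterior hy hyface]
    exact subset_coneOf _ ⟨v, hv, rfl⟩
  rw [Finset.coe_erase] at hv'
  exact hB.notMem_span_image_diff_singleton hv (coneOf_subset_span _ hv')

theorem linearIndepOn_insert_diff_singleton (hG : LinearIndepOn ℝ toNR G)
    (hBG : (B : Set (Fin d → ℤ)) ⊆ G) (hx : toNR x = ∑ v ∈ B, c v • toNR v) (hxi : xi ∈ B)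
    (hcxi : c xi ≠ 0) : LinearIndepOn ℝ toNR (insert x (G \ {xi})) := by
  refine linearIndepOn_insert_iff.2 ⟨hG.mono Set.sdiff_subset, fun hspan => ?_⟩
  refine absurd ?_ (hG.notMem_span_image_diff_singleton (hBG hxi))
  rw [← Finset.add_sum_erase _ _ hxi] at hx
  refine (Submodule.smul_mem_iff _ hcxi).1 (eq_sub_of_add_eq hx.symm ▸ Submodule.sub_mem _ hspan ?_)
  refine Submodule.sum_mem _ fun v hv => Submodule.smul_mem _ _ (Submodule.subset_span ?_)
  exact ⟨v, ⟨hBG (Finset.mem_of_mem_erase hv), Finset.ne_of_mem_erase hv⟩, rfl⟩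

theorem toNR_notMem_coneOf_insert_diff_singleton (hG : LinearIndepOn ℝ toNR G)
    (hBG : (B : Set (Fin d → ℤ)) ⊆ G) (hc : ∀ v ∈ B, 0 < c v)
    (hx : toNR x = ∑ v ∈ B, c v • toNR v) (hxi : xi ∈ B) {xj : Fin d → ℤ} (hxj : xj ∈ B)
    (hji : xj ≠ xi) : toNR xi ∉ coneOf (toNR '' insert x (G \ {xi})) := by
  -- a functional vanishing at `x`, nonnegative on `G \ {xi}` and negative at `xi`
  obtain ⟨u, hu⟩ := hG.exists_linearMap_apply_eq fun v =>
    if v = xi then -c xj else if v = xj then c xi else 0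
  have hux : u (toNR x) = 0 := by
    rw [hx, map_sum, Finset.sum_eq_add xi xj hji.symm]
    · rw [map_smul, map_smul, hu xi (hBG hxi), hu xj (hBG hxj), if_pos rfl, if_neg hji,
        if_pos rfl, smul_eq_mul, smul_eq_mul]
      ring
    · intro v hv hvij
      simp [hu v (hBG hv), hvij.1, hvij.2]
    · exact fun h => absurd hxi h
    · exact fun h => absurd hxj h
  intro hmem
  have hnonneg := map_nonneg_of_mem_coneOf (u := u) ?_ hmem
  · rw [hu xi (hBG hxi), if_pos rfl] at hnonneg
    linarith [hc xj hxj]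
  · rintro _ ⟨v, hv | ⟨hvG, hvxi⟩, rfl⟩
    · rw [hv, hux]
    · rw [hu v hvG, if_neg (Set.mem_singleton_iff.not.1 hvxi)]
      split_ifs
      · exact (hc xi hxi).le
      · exact le_rfl

end Exchange

namespace Fan

variable {d : ℕ} (F : Fan d) {σ τ : Set (NR d)} {x xi : Fin d → ℤ}

theorem coneOf_subset_of_mem (hτ : τ ∈ F.cones) {T : Set (NR d)} (hT : T ⊆ τ) :
    coneOf T ⊆ τ := by
  obtain ⟨S, rfl⟩ := F.rational τ hτ
  exact coneOf_subset_iff.2 hT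

theorem isFaceOf_of_subset (hσ : σ ∈ F.cones) (hτ : τ ∈ F.cones) (h : σ ⊆ τ) :
    IsFaceOf σ τ := by
  simpa [Set.inter_eq_right.2 h] using F.inter_face τ hτ σ hσ

theorem subset_of_mem_intrinsicInterior (hσ : σ ∈ F.cones) (hτ : τ ∈ F.cones) {z : NR d}
    (hz : z ∈ intrinsicInterior ℝ σ) (hzτ : z ∈ τ) : σ ⊆ τ := by
  rw [← (F.inter_face σ hσ τ hτ).eq_of_mem_intrinsicInterior hz ⟨intrinsicInterior_subset hz, hzτ⟩]
  exact Set.inter_subset_right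

theorem coneGens_mono (h : σ ⊆ τ) : F.coneGens σ ⊆ F.coneGens τ :=
  fun _ hv => ⟨hv.1, h hv.2⟩

/-- The cone `σ_i + τ'` of the star subdivision, for `τ = σ + τ'` and `x_i = xi`. -/
def starCone (σ τ : Set (NR d)) (x xi : Fin d → ℤ) : Set (NR d) :=
  coneOf (toNR '' insert x ((F.coneGens τ \ F.coneGens σ) ∪ (F.coneGens σ \ {xi})))

theorem starCone_eq (h : σ ⊆ τ) (hxi : xi ∈ F.coneGens σ) :
    F.starCone σ τ x xi = coneOf (toNR '' insert x (F.coneGens τ \ {xi})) := by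
  rw [starCone, Set.sdiff_union_sdiff_cancel (F.coneGens_mono h) (Set.singleton_subset_iff.2 hxi)]

theorem starCone_subset (hτ : τ ∈ F.cones) (h : σ ⊆ τ) (hx : toNR x ∈ σ) :
    F.starCone σ τ x xi ⊆ τ := by
  refine F.coneOf_subset_of_mem hτ ?_
  rintro _ ⟨v, rfl | ⟨hv, -⟩ | ⟨hv, -⟩, rfl⟩
  · exact h hx
  · exact hv.2
  · exact h hv.2

variable {F}

theorem IsSimplicial.exists_coneGens_eq_image_primPart (hs : F.IsSimplicial) (hτ : τ ∈ F.cones) :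
    ∃ S : Finset (Fin d → ℤ), LinearIndepOn ℝ toNR (S : Set (Fin d → ℤ)) ∧ (∀ s ∈ S, s ≠ 0) ∧
      τ = coneOf (toNR '' S) ∧ F.coneGens τ = primPart '' S := by
  obtain ⟨S, hli, rfl⟩ := hs τ hτ
  replace hli : LinearIndepOn ℝ id (toNR '' (S : Set (Fin d → ℤ))) := hli
  have hS0 : ∀ s ∈ S, s ≠ 0 := fun s hs h0 =>
    hli.zero_notMem_image ⟨toNR s, ⟨s, hs, rfl⟩, by simp [h0]⟩
  refine ⟨S, linearIndepOn_toNR_iff.2 hli, hS0, rfl, Set.Subset.antisymm ?_ ?_⟩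
  · rintro v ⟨⟨hvprim, hvray⟩, hvτ⟩
    have hface : IsFaceOf (coneOf {toNR v}) (coneOf (toNR '' S)) :=
      F.isFaceOf_of_subset hvray hτ (F.coneOf_subset_of_mem hτ (Set.singleton_subset_iff.2 hvτ))
    obtain ⟨_, ⟨s, hs, rfl⟩, c, hc, hsv⟩ :=
      exists_pos_smul_mem_of_isFaceOf (toNR_eq_zero.not.2 hvprim.1) hface
    have hcs : (0 : ℝ) < content s := by exact_mod_cast content_pos (hS0 s hs)
    refine ⟨s, hs, (isPrimitive_primPart (hS0 s hs)).eq_of_toNR_eq_smul hvprim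
      (div_pos hc hcs) ?_⟩
    rw [toNR_primPart (hS0 s hs), hsv, smul_smul, inv_mul_eq_div]
  · rintro _ ⟨s, hs, rfl⟩
    have hface : IsFaceOf (coneOf {toNR s}) (coneOf (toNR '' S)) :=
      isFaceOf_coneOf_of_subset hli (Set.singleton_subset_iff.2 ⟨s, hs, rfl⟩)
    refine ⟨⟨isPrimitive_primPart (hS0 s hs), ?_⟩, hface.subset ?_⟩
    · rw [coneOf_toNR_primPart (hS0 s hs)]
      exact F.face_mem _ hτ _ hface
    · rw [← coneOf_toNR_primPart (hS0 s hs)]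
      exact subset_coneOf _ rfl

theorem IsSimplicial.linearIndepOn_coneGens (hs : F.IsSimplicial) (hτ : τ ∈ F.cones) :
    LinearIndepOn ℝ toNR (F.coneGens τ) := by
  obtain ⟨S, hli, hS0, -, hG⟩ := hs.exists_coneGens_eq_image_primPart hτ
  have hc : ∀ s : (S : Set (Fin d → ℤ)), ((content s.1 : ℝ)⁻¹) ≠ 0 := fun s =>
    inv_ne_zero (by exact_mod_cast (content_pos (hS0 s.1 s.2)).ne')
  have hscaled : LinearIndepOn ℝ (fun s => ((content s : ℝ)⁻¹) • toNR s)
      (S : Set (Fin d → ℤ)) :=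
    hli.units_smul fun s => Units.mk0 _ (hc s)
  rw [hG]
  exact LinearIndepOn.image_of_comp _ _
    (hscaled.congr fun s hs => (toNR_primPart (hS0 s hs)).symm)

theorem IsSimplicial.eq_coneOf_coneGens (hs : F.IsSimplicial) (hτ : τ ∈ F.cones) :
    τ = coneOf (toNR '' F.coneGens τ) := by
  obtain ⟨S, -, hS0, hτS, hG⟩ := hs.exists_coneGens_eq_image_primPart hτ
  rw [hG, hτS]
  refine Set.Subset.antisymm (coneOf_subset_iff.2 ?_) (coneOf_subset_iff.2 ?_)
  · rintro _ ⟨s, hs, rfl⟩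
    rw [← Set.singleton_subset_iff, ← coneOf_subset_iff, ← coneOf_toNR_primPart (hS0 s hs)]
    exact coneOf_mono (Set.singleton_subset_iff.2 ⟨primPart s, ⟨s, hs, rfl⟩, rfl⟩)
  · rintro _ ⟨_, ⟨s, hs, rfl⟩, rfl⟩
    rw [← Set.singleton_subset_iff, ← coneOf_subset_iff, coneOf_toNR_primPart (hS0 s hs)]
    exact coneOf_mono (Set.singleton_subset_iff.2 ⟨s, hs, rfl⟩)

theorem IsSimplicial.coneOf_mem (hs : F.IsSimplicial) (hτ : τ ∈ F.cones)
    {A : Set (Fin d → ℤ)} (hA : A ⊆ F.coneGens τ) : coneOf (toNR '' A) ∈ F.cones := by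
  have hface := isFaceOf_coneOf_of_subset
    (linearIndepOn_toNR_iff.1 (hs.linearIndepOn_coneGens hτ)) (Set.image_mono hA)
  rw [← hs.eq_coneOf_coneGens hτ] at hface
  exact F.face_mem τ hτ _ hface

theorem IsPrimitiveCollection.erase_nonempty {P : Finset (Fin d → ℤ)}
    (hP : F.IsPrimitiveCollection P) {x : Fin d → ℤ} (hx : x ∈ P) : (P.erase x).Nonempty := by
  rw [Finset.nonempty_iff_ne_empty, Ne, Finset.erase_eq_empty_iff]
  rintro (h | rfl)
  · exact Finset.not_nonempty_empty (h ▸ hP.1)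
  · exact hP.2.2.1 (by simpa using (hP.2.1 hx).2)

end Fan

structure StarSubdivisionSetting {d : ℕ} (F F' : Fan d) (σ : Set (NR d)) (x : Fin d → ℤ)
    (Gσ : Finset (Fin d → ℤ)) : Prop where
  simplicial : F.IsSimplicial
  mem_cones : σ ∈ F.cones
  two_le_coneDim : 2 ≤ coneDim σ
  isPrimitive : IsPrimitive x
  mem_intrinsicInterior : toNR x ∈ intrinsicInterior ℝ σ
  coe_gens : (Gσ : Set (Fin d → ℤ)) = F.coneGens σ
  isStarSubdivisionOf : F'.IsStarSubdivisionOf F σ x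

namespace StarSubdivisionSetting

variable {d : ℕ} {F F' : Fan d} {σ τ D : Set (NR d)} {x xi : Fin d → ℤ}
  {Gσ : Finset (Fin d → ℤ)}

theorem mem_cones_iff (h : StarSubdivisionSetting F F' σ x Gσ) :
    D ∈ F'.cones ↔ (D ∈ F.cones ∧ ¬IsFaceOf σ D) ∨
      ∃ τ ∈ F.cones, IsFaceOf σ τ ∧ ∃ xi ∈ F.coneGens σ, IsFaceOf D (F.starCone σ τ x xi) := by
  rw [h.isStarSubdivisionOf]
  rfl

theorem mem_gens_iff (h : StarSubdivisionSetting F F' σ x Gσ) {v : Fin d → ℤ} :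
    v ∈ Gσ ↔ v ∈ F.coneGens σ := by
  rw [← Finset.mem_coe, h.coe_gens]

theorem eq_coneOf (h : StarSubdivisionSetting F F' σ x Gσ) : σ = coneOf (toNR '' Gσ) :=
  h.coe_gens ▸ h.simplicial.eq_coneOf_coneGens h.mem_cones

theorem linearIndepOn (h : StarSubdivisionSetting F F' σ x Gσ) :
    LinearIndepOn ℝ toNR (Gσ : Set (Fin d → ℤ)) :=
  h.coe_gens ▸ h.simplicial.linearIndepOn_coneGens h.mem_cones

theorem two_le_card (h : StarSubdivisionSetting F F' σ x Gσ) : 2 ≤ Gσ.card := by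
  classical
  calc 2 ≤ coneDim σ := h.two_le_coneDim
    _ ≤ (Gσ.image toNR).card := by
      rw [h.eq_coneOf, ← Finset.coe_image]
      exact coneDim_coneOf_le_card _
    _ ≤ Gσ.card := Finset.card_image_le

theorem exists_pos_coeffs (h : StarSubdivisionSetting F F' σ x Gσ) :
    ∃ c : (Fin d → ℤ) → ℝ, (∀ v ∈ Gσ, 0 < c v) ∧ toNR x = ∑ v ∈ Gσ, c v • toNR v :=
  exists_pos_sum_of_mem_intrinsicInterior h.linearIndepOn (h.eq_coneOf ▸ h.mem_intrinsicInterior)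

theorem notMem_genSet (h : StarSubdivisionSetting F F' σ x Gσ) : x ∉ F.genSet := fun hx => by
  have hσx : σ ⊆ coneOf {toNR x} := F.subset_of_mem_intrinsicInterior h.mem_cones hx.2
    h.mem_intrinsicInterior (subset_coneOf _ rfl)
  have := (coneDim_mono hσx).trans (by simpa using coneDim_coneOf_le_card {toNR x})
  linarith [h.two_le_coneDim]

theorem notMem_gens (h : StarSubdivisionSetting F F' σ x Gσ) : x ∉ Gσ := fun hx =>
  h.notMem_genSet (h.mem_gens_iff.1 hx).1

theorem toNR_notMem_starCone (h : StarSubdivisionSetting F F' σ x Gσ) (hτ : τ ∈ F.cones)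
    (hστ : σ ⊆ τ) (hxi : xi ∈ Gσ) : toNR xi ∉ F.starCone σ τ x xi := by
  obtain ⟨c, hc, hx⟩ := h.exists_pos_coeffs
  obtain ⟨xj, hxj, hji⟩ := Finset.exists_mem_ne h.two_le_card xi
  rw [F.starCone_eq hστ (h.mem_gens_iff.1 hxi)]
  exact toNR_notMem_coneOf_insert_diff_singleton (h.simplicial.linearIndepOn_coneGens hτ)
    (h.coe_gens ▸ F.coneGens_mono hστ) hc hx hxi hxj hji

theorem exists_gen_notMem (h : StarSubdivisionSetting F F' σ x Gσ) (hD : D ∈ F'.cones) :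
    ∃ xi ∈ Gσ, toNR xi ∉ D := by
  rcases h.mem_cones_iff.1 hD with ⟨hDF, hnot⟩ | ⟨τ, hτ, hστ, xi, hxi, hface⟩
  · by_contra! hall
    refine hnot (F.isFaceOf_of_subset h.mem_cones hDF ?_)
    rw [h.eq_coneOf]
    exact F.coneOf_subset_of_mem hDF (Set.image_subset_iff.2 hall)
  · rw [← h.mem_gens_iff] at hxi
    exact ⟨xi, hxi, fun hmem => h.toNR_notMem_starCone hτ hστ.subset hxi (hface.subset hmem)⟩

theorem exists_superset (h : StarSubdivisionSetting F F' σ x Gσ) (hD : D ∈ F'.cones)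
    (hxD : toNR x ∈ D) : ∃ τ ∈ F.cones, σ ⊆ τ ∧ D ⊆ τ := by
  rcases h.mem_cones_iff.1 hD with ⟨hDF, hnot⟩ | ⟨τ, hτ, hστ, xi, -, hface⟩
  · exact absurd (F.isFaceOf_of_subset h.mem_cones hDF (F.subset_of_mem_intrinsicInterior
      h.mem_cones hDF h.mem_intrinsicInterior hxD)) hnot
  · exact ⟨τ, hτ, hστ.subset, hface.subset.trans (F.starCone_subset hτ hστ.subset
      (intrinsicInterior_subset h.mem_intrinsicInterior))⟩

theorem mem_genSet (h : StarSubdivisionSetting F F' σ x Gσ) {v : Fin d → ℤ}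
    (hv : v ∈ F'.genSet) (hvx : v ≠ x) : v ∈ F.genSet := by
  obtain ⟨hvprim, hray⟩ := hv
  rcases h.mem_cones_iff.1 hray with ⟨hrayF, -⟩ | ⟨τ, -, -, xi, -, hface⟩
  · exact ⟨hvprim, hrayF⟩
  obtain ⟨_, ⟨u, hu, rfl⟩, c, hc, huv⟩ :=
    exists_pos_smul_mem_of_isFaceOf (toNR_eq_zero.not.2 hvprim.1) hface
  rcases hu with rfl | ⟨hu, -⟩ | ⟨hu, -⟩
  · exact absurd (h.isPrimitive.eq_of_toNR_eq_smul hvprim hc huv).symm hvx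
  all_goals exact hu.1.1.eq_of_toNR_eq_smul hvprim hc huv ▸ hu.1

theorem coneOf_mem (h : StarSubdivisionSetting F F' σ x Gσ) (hτ : τ ∈ F.cones) (hστ : σ ⊆ τ)
    (hxi : xi ∈ Gσ) {A : Set (Fin d → ℤ)} (hxiA : xi ∉ A)
    (hA : ∀ w ∈ A, w ≠ x → w ∈ F.coneGens τ) : coneOf (toNR '' A) ∈ F'.cones := by
  -- `A` spans a face of `F.starCone σ τ x xi`, whose generators are independent because the
  -- coefficient of `xi` in `x` is nonzero
  obtain ⟨c, hc, hx⟩ := h.exists_pos_coeffs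
  have hind := linearIndepOn_insert_diff_singleton (h.simplicial.linearIndepOn_coneGens hτ)
    (h.coe_gens ▸ F.coneGens_mono hστ) hx hxi (hc xi hxi).ne'
  have hAsub : A ⊆ insert x (F.coneGens τ \ {xi}) := fun w hw => by
    by_cases hwx : w = x
    · exact Or.inl hwx
    · exact Or.inr ⟨hA w hw hwx, fun hwxi => hxiA (hwxi ▸ hw)⟩
  refine h.mem_cones_iff.2 (Or.inr ⟨τ, hτ, F.isFaceOf_of_subset h.mem_cones hτ hστ, xi,
    h.mem_gens_iff.1 hxi, ?_⟩)
  rw [F.starCone_eq hστ (h.mem_gens_iff.1 hxi)]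
  exact isFaceOf_coneOf_of_subset (linearIndepOn_toNR_iff.1 hind) (Set.image_mono hAsub)

variable {Pstar : Finset (Fin d → ℤ)}

theorem notMem_gens_of_mem (h : StarSubdivisionSetting F F' σ x Gσ)
    (hP : F'.IsPrimitiveCollection Pstar) (hxP : x ∈ Pstar) {v : Fin d → ℤ} (hv : v ∈ Pstar) :
    v ∉ Gσ := by
  obtain ⟨xi, hxi, hxiD⟩ := h.exists_gen_notMem (hP.2.2.2 x hxP)
  have hxiP : xi ∉ Pstar := fun hmem => hxiD (subset_coneOf _
    ⟨xi, ⟨hmem, ne_of_mem_of_not_mem hxi h.notMem_gens⟩, rfl⟩)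
  intro hvG
  have hvx : v ≠ x := ne_of_mem_of_not_mem hvG h.notMem_gens
  obtain ⟨τ, hτ, hστ, hDτ⟩ :=
    h.exists_superset (hP.2.2.2 v hv) (subset_coneOf _ ⟨x, ⟨hxP, hvx.symm⟩, rfl⟩)
  refine hP.2.2.1 (h.coneOf_mem hτ hστ hxi hxiP fun w hw hwx => ⟨h.mem_genSet (hP.2.1 hw) hwx, ?_⟩)
  by_cases hwv : w = v
  · exact hwv ▸ hστ (h.mem_gens_iff.1 hvG).2
  · exact hDτ (subset_coneOf _ ⟨w, ⟨hw, hwv⟩, rfl⟩)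

theorem coneOf_erase_union_notMem (h : StarSubdivisionSetting F F' σ x Gσ)
    (hP : F'.IsPrimitiveCollection Pstar) (hxP : x ∈ Pstar) :
    coneOf (toNR '' ↑(Pstar.erase x ∪ Gσ)) ∉ F.cones := by
  intro hE
  obtain ⟨xi, hxi⟩ := Finset.card_pos.1 (by linarith [h.two_le_card] : 0 < Gσ.card)
  have hσE : σ ⊆ coneOf (toNR '' ↑(Pstar.erase x ∪ Gσ)) := by
    rw [h.eq_coneOf]
    exact coneOf_mono (Set.image_mono (by simp))
  refine hP.2.2.1 (h.coneOf_mem hE hσE hxi (fun hmem => h.notMem_gens_of_mem hP hxP hmem hxi)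
    fun w hw hwx => ⟨h.mem_genSet (hP.2.1 hw) hwx, subset_coneOf _ ⟨w, by simp [hw, hwx], rfl⟩⟩)

theorem erase_subset (h : StarSubdivisionSetting F F' σ x Gσ)
    (hP : F'.IsPrimitiveCollection Pstar) (hxP : x ∈ Pstar) {P : Finset (Fin d → ℤ)}
    (hPR : P ⊆ Pstar.erase x ∪ Gσ) (hPF : coneOf (toNR '' P) ∉ F.cones) :
    Pstar.erase x ⊆ P := by
  intro y hy
  by_contra hyP
  obtain ⟨hyx, hyP'⟩ := Finset.mem_erase.1 hy
  obtain ⟨τ, hτ, hστ, hDτ⟩ :=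
    h.exists_superset (hP.2.2.2 y hyP') (subset_coneOf _ ⟨x, ⟨hxP, hyx.symm⟩, rfl⟩)
  refine hPF (h.simplicial.coneOf_mem hτ fun w hw => ?_)
  rcases Finset.mem_union.1 (hPR hw) with hwQ | hwG
  · obtain ⟨hwx, hwP⟩ := Finset.mem_erase.1 hwQ
    exact ⟨h.mem_genSet (hP.2.1 hwP) hwx,
      hDτ (subset_coneOf _ ⟨w, ⟨hwP, fun e => hyP (e ▸ hw)⟩, rfl⟩)⟩
  · exact F.coneGens_mono hστ (h.mem_gens_iff.1 hwG)

end StarSubdivisionSetting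

theorem primitiveCollection_of_starSubdivision_exists_orig_general {d : ℕ} (F F' : Fan d)
    (hs : F.IsSimplicial)
    (σ : Set (NR d)) (hσ : σ ∈ F.cones) (hdim : 2 ≤ coneDim σ)
    (x : Fin d → ℤ) (hx : IsPrimitive x) (hxσ : toNR x ∈ intrinsicInterior ℝ σ)
    (Gσ : Finset (Fin d → ℤ)) (hGσ : (↑Gσ : Set (Fin d → ℤ)) = F.coneGens σ)
    (hsub : F'.IsStarSubdivisionOf F σ x) :
    ∀ Pstar : Finset (Fin d → ℤ), F'.IsPrimitiveCollection Pstar → x ∈ Pstar →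
      ∃ P : Finset (Fin d → ℤ), F.IsPrimitiveCollection P ∧
        insert x (P \ Gσ) = Pstar := by
  intro Pstar hP hxP
  have h : StarSubdivisionSetting F F' σ x Gσ := ⟨hs, hσ, hdim, hx, hxσ, hGσ, hsub⟩
  obtain ⟨P, hPR, hPF, hPmin⟩ := Finset.exists_subset_not_forall_erase (R := Pstar.erase x ∪ Gσ)
    (fun A => coneOf (toNR '' (A : Set (Fin d → ℤ))) ∈ F.cones)
    (h.coneOf_erase_union_notMem hP hxP)
  have hQP := h.erase_subset hP hxP hPR hPF
  have hPQ : P \ Gσ = Pstar.erase x := by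
    refine Finset.Subset.antisymm (fun v hv => ?_) fun v hv => ?_
    · obtain ⟨hvP, hvG⟩ := Finset.mem_sdiff.1 hv
      exact (Finset.mem_union.1 (hPR hvP)).resolve_right hvG
    · exact Finset.mem_sdiff.2 ⟨hQP hv, h.notMem_gens_of_mem hP hxP (Finset.mem_of_mem_erase hv)⟩
  refine ⟨P, ⟨(hP.erase_nonempty hxP).mono hQP, fun v hv => ?_, hPF, fun z hz => ?_⟩, ?_⟩
  · rcases Finset.mem_union.1 (hPR hv) with hvQ | hvG
    · exact h.mem_genSet (hP.2.1 (Finset.mem_of_mem_erase hvQ)) (Finset.ne_of_mem_erase hvQ)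
    · exact (h.mem_gens_iff.1 hvG).1
  · simpa using hPmin z hz
  · rw [hPQ, Finset.insert_erase hxP]

/-- Every primitive collection of the star subdivision containing `x`
comes from a primitive collection of the original fan. -/
theorem primitiveCollection_of_starSubdivision_exists_orig {d : ℕ} (F F' : Fan d)
    (hc : F.IsComplete) (hs : F.IsSimplicial)
    (σ : Set (NR d)) (hσ : σ ∈ F.cones) (hdim : 2 ≤ coneDim σ)
    (x : Fin d → ℤ) (hx : IsPrimitive x) (hxσ : toNR x ∈ intrinsicInterior ℝ σ)
    (Gσ : Finset (Fin d → ℤ)) (hGσ : (↑Gσ : Set (Fin d → ℤ)) = F.coneGens σ)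
    (hsub : F'.IsStarSubdivisionOf F σ x) :
    ∀ Pstar : Finset (Fin d → ℤ), F'.IsPrimitiveCollection Pstar → x ∈ Pstar →
      ∃ P : Finset (Fin d → ℤ), F.IsPrimitiveCollection P ∧
        insert x (P \ Gσ) = Pstar :=
  primitiveCollection_of_starSubdivision_exists_orig_general F F' hs σ hσ hdim x hx hxσ Gσ hGσ hsub
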